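/- arXiv:2207.06251 — 5 statements merged into one kernel-verified Lean document; each statement's English description precedes it below -/
import Mathlib

section
/- The graph obtained from K_6 by removing the three edges of a path of length 3 is planar. -/
open SimpleGraph

/-- `H` is a minor of `G`: disjoint connected branch sets in `G`, one for each vertex of `H`,
with edges of `H` realized by edges of `G` between the corresponding branch sets. -/
def MinorOf {W V : Type*} (H : SimpleGraph W) (G : SimpleGraph V) : Prop :=
  ∃ f : W → Set V,
    (∀ w, (G.induce (f w)).Connected) ∧
    (Pairwise fun w w' => Disjoint (f w) (f w')) ∧
    (∀ w w', H.Adj w w' → ∃ a ∈ f w, ∃ b ∈ f w', G.Adj a b)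

/-- Planarity, via Wagner's theorem: no `K₅` minor and no `K₃,₃` minor. -/
def IsPlanar {V : Type*} (G : SimpleGraph V) : Prop :=
  ¬ MinorOf (completeGraph (Fin 5)) G ∧
  ¬ MinorOf (completeBipartiteGraph (Fin 3) (Fin 3)) G

/-- `M` is a maximal planar subgraph of `G`: `M` is planar, and inserting any edge of `G`
not in `M` into `M` yields a nonplanar graph. -/
def MaximalPlanarSubgraph {V : Type*} (G : SimpleGraph V) (M : G.Subgraph) : Prop :=
  IsPlanar M.coe ∧
  ∀ ⦃u v : V⦄ (h : G.Adj u v), ¬ M.Adj u v →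
    ¬ IsPlanar (M ⊔ G.subgraphOfAdj h).coe

/-- `G` contains a copy of `H` as a subgraph. -/
def ContainsSubgraph {W V : Type*} (H : SimpleGraph W) (G : SimpleGraph V) : Prop :=
  ∃ f : W → V, Function.Injective f ∧ ∀ a b, H.Adj a b → G.Adj (f a) (f b)

/-!
By Wagner's criterion it suffices to exclude `K₅` and `K₃,₃` minors. Choosing one vertex in
each branch set gives an injection into the six vertices, so a `K₃,₃` minor is a spanning
`K₃,₃` subgraph, and a `K₅` minor is either a `K₅` subgraph or has a single two-vertex branch
set `{x, y}` with `G / xy = K₅`. Both are impossible here: the deleted path `0 - 1 - 2 - 3`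
fits in no triangle of the complement `2 K₃` of `K₃,₃`, no single vertex meets all three
deleted edges, and the pairs meeting all of them (`{1, 2}`, `{0, 2}`, `{1, 3}`) are either
non-adjacent or leave a vertex adjacent to neither of them.
-/

section Minors

variable {W V V' : Type*} {H : SimpleGraph W} {G : SimpleGraph V} {G' : SimpleGraph V'}

theorem MinorOf.of_injective_hom (φ : G →g G') (hφ : Function.Injective φ)
    (h : MinorOf H G) : MinorOf H G' := by
  obtain ⟨f, hconn, hdisj, hadj⟩ := h
  refine ⟨fun w => φ '' f w, fun w => ?_, fun w w' hne => ?_, fun w w' hww' => ?_⟩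
  · refine (hconn w).map (induceHom φ (Set.mapsTo_image φ (f w))) ?_
    rintro ⟨_, a, ha, rfl⟩
    exact ⟨⟨a, ha⟩, rfl⟩
  · exact (Set.disjoint_image_iff hφ).2 (hdisj hne)
  · obtain ⟨a, ha, b, hb, hab⟩ := hadj w w' hww'
    exact ⟨φ a, Set.mem_image_of_mem φ ha, φ b, Set.mem_image_of_mem φ hb, φ.map_adj hab⟩

theorem IsPlanar.of_injective_hom (φ : G →g G') (hφ : Function.Injective φ)
    (h : IsPlanar G') : IsPlanar G :=
  ⟨fun hK => h.1 (hK.of_injective_hom φ hφ), fun hK => h.2 (hK.of_injective_hom φ hφ)⟩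

theorem isPlanar_top_deleteEdges_image (σ : V ≃ V') {s : Set (Sym2 V)}
    (h : IsPlanar ((⊤ : SimpleGraph V).deleteEdges s)) :
    IsPlanar ((⊤ : SimpleGraph V').deleteEdges (Sym2.map σ '' s)) := by
  refine h.of_injective_hom ⟨σ.symm, fun {a b} hab => ?_⟩ σ.symm.injective
  simp only [deleteEdges_adj, top_adj] at hab ⊢
  refine ⟨σ.symm.injective.ne hab.1, fun hmem => hab.2 ⟨_, hmem, ?_⟩⟩
  simp

theorem adj_of_induce_connected_of_subset_pair {s : Set V} {x y : V}
    (hconn : (G.induce s).Connected) (hs : s ⊆ {x, y}) (hx : x ∈ s) (hy : y ∈ s) (hxy : x ≠ y) :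
    G.Adj x y := by
  have : Nontrivial s := ⟨⟨⟨x, hx⟩, ⟨y, hy⟩, fun h => hxy (congrArg Subtype.val h)⟩⟩
  obtain ⟨⟨z, hz⟩, hxz⟩ := hconn.preconnected.exists_adj_of_nontrivial ⟨x, hx⟩
  rcases hs hz with rfl | rfl
  · exact (G.irrefl hxz).elim
  · exact hxz

theorem eq_of_mem_of_pairwise_disjoint {f : W → Set V}
    (hdisj : Pairwise fun w w' => Disjoint (f w) (f w'))
    {w w' : W} {a : V} (ha : a ∈ f w) (ha' : a ∈ f w') : w = w' := by
  by_contra hne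
  exact Set.disjoint_left.1 (hdisj hne) ha ha'

theorem MinorOf.containsSubgraph_of_card_le [Fintype W] [Fintype V]
    (hcard : Fintype.card V ≤ Fintype.card W) (h : MinorOf H G) : ContainsSubgraph H G := by
  obtain ⟨f, hconn, hdisj, hadj⟩ := h
  choose r hr using fun w => Set.nonempty_coe_sort.1 (hconn w).nonempty
  have hinj : Function.Injective r := fun w w' hrw =>
    eq_of_mem_of_pairwise_disjoint hdisj (hr w) (hrw ▸ hr w')
  have hsurj : Function.Surjective r := ((Fintype.bijective_iff_injective_and_card r).2
    ⟨hinj, (Fintype.card_le_of_injective r hinj).antisymm hcard⟩).2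
  refine ⟨r, hinj, fun w w' hww' => ?_⟩
  obtain ⟨a, ha, b, hb, hab⟩ := hadj w w' hww'
  obtain ⟨u, rfl⟩ := hsurj a
  obtain ⟨u', rfl⟩ := hsurj b
  rwa [eq_of_mem_of_pairwise_disjoint hdisj (hr u) ha,
    eq_of_mem_of_pairwise_disjoint hdisj (hr u') hb] at hab

theorem ContainsSubgraph.exists_complete_cut_of_completeBipartiteGraph {α β : Type*}
    [Fintype α] [Fintype β] [Fintype V] (hcard : Fintype.card V ≤ Fintype.card α + Fintype.card β)
    (h : ContainsSubgraph (completeBipartiteGraph α β) G) :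
    ∃ s : Finset V, s.card = Fintype.card α ∧ ∀ a ∈ s, ∀ b ∉ s, G.Adj a b := by
  obtain ⟨r, hinj, hadj⟩ := h
  have hsurj : Function.Surjective r := ((Fintype.bijective_iff_injective_and_card r).2
    ⟨hinj, (Fintype.card_le_of_injective r hinj).antisymm (by simpa using hcard)⟩).2
  refine ⟨Finset.univ.map ⟨r ∘ Sum.inl, hinj.comp Sum.inl_injective⟩, by simp, ?_⟩
  intro a ha b hb
  obtain ⟨i, -, rfl⟩ := Finset.mem_map.1 ha
  obtain ⟨j | j, rfl⟩ := hsurj b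
  · exact absurd (Finset.mem_map_of_mem _ (Finset.mem_univ j)) hb
  · exact hadj _ _ (by simp)

theorem Function.Injective.exists_range_eq_compl_singleton {α β : Type*} [Fintype α]
    [Fintype β] {r : α → β} (hr : Function.Injective r)
    (hcard : Fintype.card β = Fintype.card α + 1) : ∃ y, Set.range r = {y}ᶜ := by
  classical
  obtain ⟨y, hy⟩ : ∃ y, y ∉ Set.range r := by
    by_contra! hsurj
    have := Fintype.card_le_of_surjective r hsurj
    omega
  refine ⟨y, ?_⟩
  have himage : Finset.univ.image r = Finset.univ.erase y := by
    refine Finset.eq_of_subset_of_card_le (fun a ha => ?_) ?_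
    · obtain ⟨w, -, rfl⟩ := Finset.mem_image.1 ha
      exact Finset.mem_erase.2 ⟨fun h => hy ⟨w, h⟩, Finset.mem_univ _⟩
    · rw [Finset.card_erase_of_mem (Finset.mem_univ y), Finset.card_image_of_injective _ hr]
      simp [hcard]
  ext a
  simpa using congrArg (a ∈ ·) himage

theorem MinorOf.completeGraph_of_card_eq_succ [Fintype W] [Fintype V]
    (hcard : Fintype.card V = Fintype.card W + 1) (h : MinorOf (completeGraph W) G) :
    (∃ y, G.IsClique ({y}ᶜ : Set V)) ∨
      ∃ x y, G.Adj x y ∧ G.IsClique ({x, y}ᶜ : Set V) ∧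
        ∀ c, c ≠ x → c ≠ y → G.Adj c x ∨ G.Adj c y := by
  obtain ⟨f, hconn, hdisj, hadj⟩ := h
  choose r hr using fun w => Set.nonempty_coe_sort.1 (hconn w).nonempty
  have hinj : Function.Injective r := fun w w' hrw =>
    eq_of_mem_of_pairwise_disjoint hdisj (hr w) (hrw ▸ hr w')
  obtain ⟨y, hrange⟩ := hinj.exists_range_eq_compl_singleton hcard
  have hry : ∀ w, r w ≠ y := fun w => hrange.subset (Set.mem_range_self w)
  have hy : ∀ a, a ≠ y → ∃ w, r w = a := fun a hay => hrange.superset hay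
  -- hence every branch set is `{r w}`, except that one of them may also contain `y`
  have hmem : ∀ {w a}, a ∈ f w → a ≠ y → a = r w := fun {w a} ha hay => by
    obtain ⟨u, rfl⟩ := hy a hay
    rw [eq_of_mem_of_pairwise_disjoint hdisj (hr u) ha]
  have hadj_rep : ∀ {u u'}, u ≠ u' → y ∉ f u → y ∉ f u' → G.Adj (r u) (r u') := by
    intro u u' hne hu hu'
    obtain ⟨a, ha, b, hb, hab⟩ := hadj u u' hne
    rwa [hmem ha (ne_of_mem_of_not_mem ha hu), hmem hb (ne_of_mem_of_not_mem hb hu')] at hab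
  by_cases hyf : ∃ w₀, y ∈ f w₀
  · obtain ⟨w₀, hw₀⟩ := hyf
    have hyf' : ∀ w, r w ≠ r w₀ → y ∉ f w := fun w hw hyw =>
      hw (congrArg r (eq_of_mem_of_pairwise_disjoint hdisj hyw hw₀))
    right
    refine ⟨r w₀, y, ?_, ?_, fun c hcx hcy => ?_⟩
    · refine adj_of_induce_connected_of_subset_pair (hconn w₀) (fun a ha => ?_) (hr w₀) hw₀
        (hry w₀)
      by_cases hay : a = y
      · exact Or.inr hay
      · exact Or.inl (hmem ha hay)
    · intro a ha b hb hab
      simp only [Set.mem_compl_iff, Set.mem_insert_iff, Set.mem_singleton_iff, not_or] at ha hb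
      obtain ⟨u, rfl⟩ := hy _ ha.2
      obtain ⟨u', rfl⟩ := hy _ hb.2
      exact hadj_rep (fun h => hab (congrArg r h)) (hyf' u ha.1) (hyf' u' hb.1)
    · obtain ⟨u, rfl⟩ := hy c hcy
      obtain ⟨a, ha, b, hb, hab⟩ := hadj u w₀ (fun h => hcx (congrArg r h))
      rw [hmem ha (ne_of_mem_of_not_mem ha (hyf' u hcx))] at hab
      by_cases hby : b = y
      · exact Or.inr (hby ▸ hab)
      · exact Or.inl (hmem hb hby ▸ hab)
  · rw [not_exists] at hyf
    refine Or.inl ⟨y, fun a ha b hb hab => ?_⟩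
    obtain ⟨u, rfl⟩ := hy a ha
    obtain ⟨u', rfl⟩ := hy b hb
    exact hadj_rep (fun h => hab (congrArg r h)) (hyf u) (hyf u')

end Minors

abbrev completeMinusPath : SimpleGraph (Fin 6) :=
  (⊤ : SimpleGraph (Fin 6)).deleteEdges {s(0, 1), s(1, 2), s(2, 3)}

theorem completeMinusPath_not_isClique_compl_singleton (y : Fin 6) :
    ¬ completeMinusPath.IsClique ({y}ᶜ : Set (Fin 6)) := by
  have : ∀ y : Fin 6, ¬ completeMinusPath.IsClique (({y}ᶜ : Finset (Fin 6)) : Set (Fin 6)) := by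
    decide
  simpa using this y

theorem completeMinusPath_not_complete_contraction (x y : Fin 6) :
    ¬ (completeMinusPath.Adj x y ∧ completeMinusPath.IsClique ({x, y}ᶜ : Set (Fin 6)) ∧
      ∀ c, c ≠ x → c ≠ y → completeMinusPath.Adj c x ∨ completeMinusPath.Adj c y) := by
  have : ∀ x y : Fin 6, completeMinusPath.Adj x y →
      completeMinusPath.IsClique (({x, y}ᶜ : Finset (Fin 6)) : Set (Fin 6)) →
      ∃ c, c ≠ x ∧ c ≠ y ∧ ¬ completeMinusPath.Adj c x ∧ ¬ completeMinusPath.Adj c y := by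
    decide
  rintro ⟨hxy, hclique, hcover⟩
  obtain ⟨c, hcx, hcy, hnx, hny⟩ :=
    this x y hxy (by rwa [Finset.coe_compl, Finset.coe_insert, Finset.coe_singleton])
  exact (hcover c hcx hcy).elim hnx hny

theorem not_minorOf_completeGraph_completeMinusPath :
    ¬ MinorOf (completeGraph (Fin 5)) completeMinusPath := by
  intro h
  rcases h.completeGraph_of_card_eq_succ (by simp) with ⟨y, hy⟩ | ⟨x, y, hxy, hclique, hcover⟩
  · exact completeMinusPath_not_isClique_compl_singleton y hy
  · exact completeMinusPath_not_complete_contraction x y ⟨hxy, hclique, hcover⟩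

theorem not_minorOf_completeBipartiteGraph_completeMinusPath :
    ¬ MinorOf (completeBipartiteGraph (Fin 3) (Fin 3)) completeMinusPath := by
  intro h
  have hsub := h.containsSubgraph_of_card_le (by simp)
  obtain ⟨s, hs, hcut⟩ := hsub.exists_complete_cut_of_completeBipartiteGraph (by simp)
  have : ∀ s : Finset (Fin 6), s.card = 3 → ∃ a ∈ s, ∃ b ∉ s, ¬ completeMinusPath.Adj a b := by
    decide
  obtain ⟨a, ha, b, hb, hab⟩ := this s (by simpa using hs)
  exact hab (hcut a ha b hb)

theorem isPlanar_completeMinusPath : IsPlanar completeMinusPath :=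
  ⟨not_minorOf_completeGraph_completeMinusPath,
    not_minorOf_completeBipartiteGraph_completeMinusPath⟩

/-- `K₆` minus the three edges of a path of length 3 is planar. -/
theorem K6_minus_path3_planar (v : Fin 4 → Fin 6) (hv : Function.Injective v) :
    IsPlanar ((⊤ : SimpleGraph (Fin 6)).deleteEdges
      {s(v 0, v 1), s(v 1, v 2), s(v 2, v 3)}) := by
  obtain ⟨σ, hσ⟩ := Equiv.Perm.exists_extending_pair ![0, 1, 2, 3] v (by decide) hv
  have hpath : {s(v 0, v 1), s(v 1, v 2), s(v 2, v 3)} =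
      Sym2.map σ '' {s(0, 1), s(1, 2), s(2, 3)} := by
    simp [Set.image_insert_eq, ← hσ]
  rw [hpath]
  exact isPlanar_top_deleteEdges_image σ isPlanar_completeMinusPath
end

section
/- If H is obtained from G by a ΔY-exchange on a triangle T of G, and G is nonplanar, then H is nonplanar; equivalently, the YΔ-operation preserves planarity. -/
/-!
Take a model of `K = K₅` or `K₃,₃` in `G` and call two distinct triangle vertices *linked* if
they lie in one branch set or in two adjacent ones; only triangle edges between linked vertices
matter to the model. Since two sides of a triangle share a vertex, a single branch set contains
an end of every linked pair unless `x, y, z` lie in three distinct, pairwise adjacent branch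
sets. In the first case, putting the new vertex into that branch set reroutes every such edge
through it and gives a model of `K` in the ΔY-graph. In the second case `K` has a triangle, so
`K = K₅`, and the model becomes a model of `K₅` with its own triangle ΔY-exchanged, a graph that
contains `K₃,₃`.
-/

open SimpleGraph

/-- The ΔY-exchange: delete the triangle edges on `x, y, z` and add a new vertex
(`none`) adjacent to `x`, `y`, `z`. -/
def deltaY {V : Type*} (G : SimpleGraph V) (x y z : V) : SimpleGraph (Option V) where
  Adj a b :=
    match a, b with
    | some a, some b => G.Adj a b ∧ s(a, b) ∉ ({s(x, y), s(y, z), s(x, z)} : Set (Sym2 V))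
    | some a, none => a = x ∨ a = y ∨ a = z
    | none, some b => b = x ∨ b = y ∨ b = z
    | none, none => False
  symm := by
    constructor
    rintro (_ | a) (_ | b) h
    · exact h
    · exact h
    · exact h
    · exact ⟨h.1.symm, by rw [show s(b, a) = s(a, b) from Sym2.eq_swap]; exact h.2⟩
  loopless := by
    constructor
    rintro (_ | a) h
    · exact h
    · exact h.1.ne rfl

namespace SimpleGraph

variable {V W : Type*} {G : SimpleGraph V} {H : SimpleGraph W}

lemma Reachable.map_of_adj_reachable (φ : V → W)
    (hφ : ∀ a b, G.Adj a b → H.Reachable (φ a) (φ b)) {a b : V} (h : G.Reachable a b) :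
    H.Reachable (φ a) (φ b) := by
  rw [reachable_iff_reflTransGen] at h ⊢
  exact h.lift' φ fun a b hab => (reachable_iff_reflTransGen _ _).1 (hφ a b hab)

lemma Connected.of_reachable_map (hG : G.Connected) (φ : V → W)
    (hφ : ∀ a b, G.Adj a b → H.Reachable (φ a) (φ b)) (hsurj : ∀ w, ∃ v, H.Reachable (φ v) w) :
    H.Connected := by
  have hbase : ∀ w, H.Reachable (φ hG.nonempty.some) w := fun w =>
    let ⟨v, hv⟩ := hsurj w
    ((hG.preconnected _ v).map_of_adj_reachable φ hφ).trans hv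
  exact { preconnected := fun u w => (hbase u).symm.trans (hbase w)
          nonempty := ⟨φ hG.nonempty.some⟩ }

end SimpleGraph

section DeltaY

variable {V : Type*} {G : SimpleGraph V} {x y z a b : V}

@[simp]
lemma deltaY_adj_some_some :
    (deltaY G x y z).Adj (some a) (some b) ↔
      G.Adj a b ∧ ¬(a ∈ ({x, y, z} : Set V) ∧ b ∈ ({x, y, z} : Set V)) := by
  refine and_congr_right fun hab => not_congr ?_
  have := hab.ne
  simp only [Set.mem_insert_iff, Set.mem_singleton_iff, Sym2.eq_iff]
  aesop

@[simp]
lemma deltaY_adj_some_none : (deltaY G x y z).Adj (some a) none ↔ a ∈ ({x, y, z} : Set V) :=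
  Iff.rfl

@[simp]
lemma deltaY_adj_none_some : (deltaY G x y z).Adj none (some a) ↔ a ∈ ({x, y, z} : Set V) :=
  Iff.rfl

def extendBranch (B : Set V) (N : Prop) : Set (Option V) := {u | u.elim N (· ∈ B)}

lemma connected_induce_extendBranch {B : Set V} {N : Prop} (hB : (G.induce B).Connected)
    (hN : N → ∃ t ∈ B, t ∈ ({x, y, z} : Set V))
    (hpair : ∀ a ∈ B, ∀ b ∈ B, a ∈ ({x, y, z} : Set V) → b ∈ ({x, y, z} : Set V) → a ≠ b → N) :
    ((deltaY G x y z).induce (extendBranch B N)).Connected := by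
  set H := (deltaY G x y z).induce (extendBranch B N)
  let φ : B → extendBranch B N := fun a => ⟨some a, a.2⟩
  refine hB.of_reachable_map φ (fun a b (hab : G.Adj a b) => ?_) ?_
  · by_cases hT : a.1 ∈ ({x, y, z} : Set V) ∧ b.1 ∈ ({x, y, z} : Set V)
    · -- a triangle edge is replaced by the path through the new vertex
      let c : extendBranch B N := ⟨none, hpair a a.2 b b.2 hT.1 hT.2 hab.ne⟩
      exact (show H.Adj (φ a) c from hT.1).reachable.trans (show H.Adj c (φ b) from hT.2).reachable
    · exact (show H.Adj (φ a) (φ b) from deltaY_adj_some_some.2 ⟨hab, hT⟩).reachable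
  · rintro ⟨_ | c, hc⟩
    · obtain ⟨t, htB, htT⟩ := hN hc
      exact ⟨⟨t, htB⟩, (show H.Adj (φ ⟨t, htB⟩) ⟨none, hc⟩ from htT).reachable⟩
    · exact ⟨⟨c, hc⟩, Reachable.refl _⟩

end DeltaY

section Minor

variable {V W : Type*} {K : SimpleGraph W} {G : SimpleGraph V} {f : W → Set V}

structure IsMinorModel (K : SimpleGraph W) (G : SimpleGraph V) (f : W → Set V) : Prop where
  connected : ∀ w, (G.induce (f w)).Connected
  disjoint : Pairwise fun w w' => Disjoint (f w) (f w')
  exists_adj : ∀ w w', K.Adj w w' → ∃ a ∈ f w, ∃ b ∈ f w', G.Adj a b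

lemma minorOf_iff_exists_isMinorModel : MinorOf K G ↔ ∃ f, IsMinorModel K G f :=
  exists_congr fun _ => ⟨fun ⟨h₁, h₂, h₃⟩ => ⟨h₁, h₂, h₃⟩, fun ⟨h₁, h₂, h₃⟩ => ⟨h₁, h₂, h₃⟩⟩

lemma MinorOf.of_containsSubgraph {W' : Type*} {K' : SimpleGraph W'} (hK : MinorOf K G)
    (h : ContainsSubgraph K' K) : MinorOf K' G := by
  obtain ⟨f, hconn, hdisj, hadj⟩ := hK
  obtain ⟨ι, hι, hhom⟩ := h
  exact ⟨f ∘ ι, fun w => hconn (ι w), fun w w' hne => hdisj (hι.ne hne),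
    fun w w' h => hadj _ _ (hhom w w' h)⟩

lemma IsMinorModel.eq_of_mem (hf : IsMinorModel K G f) {a : V} {w w' : W} (h : a ∈ f w)
    (h' : a ∈ f w') : w = w' :=
  hf.disjoint.eq (Set.not_disjoint_iff.2 ⟨a, h, h'⟩)

open Classical in
noncomputable def branchOf (f : W → Set V) (v : V) : Option W :=
  if h : ∃ w, v ∈ f w then some h.choose else none

lemma IsMinorModel.branchOf_eq_some_iff (hf : IsMinorModel K G f) {v : V} {w : W} :
    branchOf f v = some w ↔ v ∈ f w := by
  unfold branchOf
  split_ifs with h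
  · exact ⟨fun e => Option.some_injective _ e ▸ h.choose_spec,
      fun hv => congrArg some (hf.eq_of_mem h.choose_spec hv)⟩
  · exact ⟨nofun, fun hv => h ⟨w, hv⟩⟩

def Linked (K : SimpleGraph W) (p q : Option W) : Prop := ∃ w ∈ p, ∃ w' ∈ q, w = w' ∨ K.Adj w w'

lemma Linked.symm {p q : Option W} : Linked K p q → Linked K q p := by
  rintro ⟨w, hw, w', hw', h⟩
  exact ⟨w', hw', w, hw, h.imp Eq.symm Adj.symm⟩

lemma exists_cover_or_triangle_of_option (K : SimpleGraph W) (p q r : Option W) :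
    (∃ w₁ ∈ p, ∃ w₂ ∈ q, ∃ w₃ ∈ r, K.Adj w₁ w₂ ∧ K.Adj w₁ w₃ ∧ K.Adj w₂ w₃) ∨
    ∃ o, (o = p ∨ o = q ∨ o = r) ∧ (Linked K p q → o = p ∨ o = q) ∧
      (Linked K q r → o = q ∨ o = r) ∧ (Linked K p r → o = p ∨ o = r) := by
  -- two sides of a triangle always share a vertex
  by_cases hpr : Linked K p r; swap
  · exact .inr ⟨q, by tauto⟩
  by_cases hpq : Linked K p q; swap
  · exact .inr ⟨r, by tauto⟩
  by_cases hqr : Linked K q r; swap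
  · exact .inr ⟨p, by tauto⟩
  obtain ⟨w₁, rfl, w₂, rfl, h₁₂⟩ := hpq
  obtain ⟨_, ⟨⟩, w₃, rfl, h₂₃⟩ := hqr
  obtain ⟨_, ⟨⟩, _, ⟨⟩, h₁₃⟩ := hpr
  by_cases e₁₂ : w₁ = w₂
  · subst e₁₂
    exact .inr ⟨some w₁, by tauto⟩
  by_cases e₂₃ : w₂ = w₃
  · subst e₂₃
    exact .inr ⟨some w₂, by tauto⟩
  by_cases e₁₃ : w₁ = w₃
  · subst e₁₃
    exact .inr ⟨some w₁, by tauto⟩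
  exact .inl ⟨w₁, rfl, w₂, rfl, w₃, rfl, h₁₂.resolve_left e₁₂, h₁₃.resolve_left e₁₃,
    h₂₃.resolve_left e₂₃⟩

structure AbsorbsTriangle (K : SimpleGraph W) (f : W → Set V) (x y z : V) (o : Option W) :
    Prop where
  meets : ∀ w, o = some w → ∃ t ∈ f w, t ∈ ({x, y, z} : Set V)
  covers : ∀ a ∈ ({x, y, z} : Set V), ∀ b ∈ ({x, y, z} : Set V), a ≠ b → ∀ w w', a ∈ f w →
    b ∈ f w' → (w = w' ∨ K.Adj w w') → o = some w ∨ o = some w'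

lemma IsMinorModel.exists_absorbsTriangle_or_triangle (hf : IsMinorModel K G f) (x y z : V) :
    (∃ w₁ w₂ w₃, x ∈ f w₁ ∧ y ∈ f w₂ ∧ z ∈ f w₃ ∧ K.Adj w₁ w₂ ∧ K.Adj w₁ w₃ ∧ K.Adj w₂ w₃) ∨
      ∃ o, AbsorbsTriangle K f x y z o := by
  have key {v : V} {w : W} : branchOf f v = some w ↔ v ∈ f w := hf.branchOf_eq_some_iff
  rcases exists_cover_or_triangle_of_option K (branchOf f x) (branchOf f y) (branchOf f z) with
    ⟨w₁, h₁, w₂, h₂, w₃, h₃, h⟩ | ⟨o, ho, hxy, hyz, hxz⟩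
  · exact .inl ⟨w₁, w₂, w₃, key.1 h₁, key.1 h₂, key.1 h₃, h⟩
  refine .inr ⟨o, ⟨?_, fun a ha b hb hab w w' haw hbw' hww' => ?_⟩⟩
  · rintro w rfl
    rcases ho with h | h | h
    exacts [⟨x, key.1 h.symm, .inl rfl⟩, ⟨y, key.1 h.symm, .inr (.inl rfl)⟩,
      ⟨z, key.1 h.symm, .inr (.inr rfl)⟩]
  have hl : Linked K (branchOf f a) (branchOf f b) := ⟨w, key.2 haw, w', key.2 hbw', hww'⟩
  have hl' := hl.symm
  rw [← key.2 haw, ← key.2 hbw']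
  rcases ha with rfl | rfl | rfl <;> rcases hb with rfl | rfl | rfl <;> tauto

variable {x y z : V}

lemma IsMinorModel.minorOf_deltaY_of_absorbsTriangle (hf : IsMinorModel K G f) {o : Option W}
    (ho : AbsorbsTriangle K f x y z o) : MinorOf K (deltaY G x y z) := by
  refine ⟨fun w => extendBranch (f w) (o = some w), fun w => ?_, fun w w' hne => ?_,
    fun w w' hadj => ?_⟩
  · refine connected_induce_extendBranch (hf.connected w) (ho.meets w)
      fun a ha b hb haT hbT hab => ?_
    simpa using ho.covers a haT b hbT hab w w ha hb (.inl rfl)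
  · refine Set.disjoint_left.2 ?_
    rintro (_ | a) h h'
    · exact hne (Option.some_injective _ (h.symm.trans h'))
    · exact hne (hf.eq_of_mem h h')
  · obtain ⟨a, ha, b, hb, hab⟩ := hf.exists_adj w w' hadj
    by_cases hT : a ∈ ({x, y, z} : Set V) ∧ b ∈ ({x, y, z} : Set V)
    · rcases ho.covers a hT.1 b hT.2 hab.ne w w' ha hb (.inr hadj) with h | h
      · exact ⟨none, h, some b, hb, hT.2⟩
      · exact ⟨some a, ha, none, h, hT.1⟩
    · exact ⟨some a, ha, some b, hb, deltaY_adj_some_some.2 ⟨hab, hT⟩⟩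

lemma IsMinorModel.minorOf_deltaY_deltaY (hf : IsMinorModel K G f) {w₁ w₂ w₃ : W}
    (hx : x ∈ f w₁) (hy : y ∈ f w₂) (hz : z ∈ f w₃)
    (h₁₂ : w₁ ≠ w₂) (h₂₃ : w₂ ≠ w₃) (h₁₃ : w₁ ≠ w₃) :
    MinorOf (deltaY K w₁ w₂ w₃) (deltaY G x y z) := by
  have hT : ∀ a ∈ ({x, y, z} : Set V), ∀ w, a ∈ f w →
      (a = x ∧ w = w₁) ∨ (a = y ∧ w = w₂) ∨ (a = z ∧ w = w₃) := by
    rintro a (rfl | rfl | rfl) w ha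
    exacts [.inl ⟨rfl, hf.eq_of_mem ha hx⟩, .inr (.inl ⟨rfl, hf.eq_of_mem ha hy⟩),
      .inr (.inr ⟨rfl, hf.eq_of_mem ha hz⟩)]
  refine ⟨fun u => u.elim {none} fun w => extendBranch (f w) False, ?_, ?_, ?_⟩
  · rintro (_ | w)
    · simp only [Option.elim_none, induce_singleton_eq_top]
      exact connected_top
    refine connected_induce_extendBranch (hf.connected w) False.elim
      fun a ha b hb haT hbT hab => ?_
    rcases hT a haT w ha with ⟨rfl, rfl⟩ | ⟨rfl, rfl⟩ | ⟨rfl, rfl⟩ <;>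
      rcases hT b hbT _ hb with ⟨rfl, h⟩ | ⟨rfl, h⟩ | ⟨rfl, h⟩ <;> simp_all
  · rintro (_ | w) (_ | w') hne <;> refine Set.disjoint_left.2 ?_
    · exact absurd rfl hne
    · rintro (_ | a) h h'
      exacts [h', nomatch h]
    · rintro (_ | a) h h'
      exacts [h, nomatch h']
    · rintro (_ | a) h h'
      exacts [h, hne (congrArg some (hf.eq_of_mem h h'))]
  · rintro (_ | w) (_ | w') hadj
    · exact hadj.elim
    · rcases hadj with rfl | rfl | rfl
      exacts [⟨none, rfl, some x, hx, .inl rfl⟩, ⟨none, rfl, some y, hy, .inr (.inl rfl)⟩,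
        ⟨none, rfl, some z, hz, .inr (.inr rfl)⟩]
    · rcases hadj with rfl | rfl | rfl
      exacts [⟨some x, hx, none, rfl, .inl rfl⟩, ⟨some y, hy, none, rfl, .inr (.inl rfl)⟩,
        ⟨some z, hz, none, rfl, .inr (.inr rfl)⟩]
    · obtain ⟨hadj, hW⟩ := deltaY_adj_some_some.1 hadj
      obtain ⟨a, ha, b, hb, hab⟩ := hf.exists_adj w w' hadj
      refine ⟨some a, ha, some b, hb, deltaY_adj_some_some.2 ⟨hab, fun ⟨haT, hbT⟩ => hW ⟨?_, ?_⟩⟩⟩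
      · rcases hT a haT w ha with ⟨-, rfl⟩ | ⟨-, rfl⟩ | ⟨-, rfl⟩ <;> simp
      · rcases hT b hbT w' hb with ⟨-, rfl⟩ | ⟨-, rfl⟩ | ⟨-, rfl⟩ <;> simp

lemma containsSubgraph_K33_deltaY_K5 {w₁ w₂ w₃ : Fin 5}
    (h₁₂ : w₁ ≠ w₂) (h₂₃ : w₂ ≠ w₃) (h₁₃ : w₁ ≠ w₃) :
    ContainsSubgraph (completeBipartiteGraph (Fin 3) (Fin 3))
      (deltaY (completeGraph (Fin 5)) w₁ w₂ w₃) := by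
  obtain ⟨d, e, hde, hde'⟩ : ∃ d e, d ≠ e ∧ ({w₁, w₂, w₃}ᶜ : Finset (Fin 5)) = {d, e} := by
    refine Finset.card_eq_two.1 ?_
    rw [Finset.card_compl, Finset.card_eq_three.2 ⟨_, _, _, h₁₂, h₁₃, h₂₃, rfl⟩]
    rfl
  have hd : d ≠ w₁ ∧ d ≠ w₂ ∧ d ≠ w₃ := by
    simpa using (Finset.ext_iff.1 hde' d).2 (by simp)
  have he : e ≠ w₁ ∧ e ≠ w₂ ∧ e ≠ w₃ := by
    simpa using (Finset.ext_iff.1 hde' e).2 (by simp)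
  -- the two vertices off the triangle and the new vertex form the other side
  refine ⟨Sum.elim (some ∘ ![w₁, w₂, w₃]) ![some d, some e, none], ?_, ?_⟩
  · rintro (i | i) (j | j) h <;> fin_cases i <;> fin_cases j <;> simp_all [eq_comm]
  · rintro (i | i) (j | j) h <;> fin_cases i <;> fin_cases j <;> simp_all [eq_comm]

lemma IsMinorModel.minorOf_deltaY_or_triangle (hf : IsMinorModel K G f) (x y z : V) :
    MinorOf K (deltaY G x y z) ∨
      ∃ w₁ w₂ w₃, x ∈ f w₁ ∧ y ∈ f w₂ ∧ z ∈ f w₃ ∧ K.Adj w₁ w₂ ∧ K.Adj w₁ w₃ ∧ K.Adj w₂ w₃ := by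
  rcases hf.exists_absorbsTriangle_or_triangle x y z with h | ⟨o, ho⟩
  · exact .inr h
  · exact .inl (hf.minorOf_deltaY_of_absorbsTriangle ho)

end Minor

lemma completeBipartiteGraph_cliqueFree_three (α β : Type*) :
    (completeBipartiteGraph α β).CliqueFree 3 := by
  classical
  intro s hs
  obtain ⟨a, b, c, hab, hac, hbc, -⟩ := is3Clique_iff.1 hs
  rcases a with a | a <;> rcases b with b | b <;> rcases c with c | c <;> simp_all

theorem deltaY_preserves_nonplanar_general {V : Type*} (G : SimpleGraph V) (x y z : V)
    (hG : ¬ IsPlanar G) : ¬ IsPlanar (deltaY G x y z) := by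
  rintro ⟨hK₅, hK₃₃⟩
  refine hG ⟨fun hG₅ => ?_, fun hG₃₃ => ?_⟩
  · obtain ⟨f, hf⟩ := minorOf_iff_exists_isMinorModel.1 hG₅
    rcases hf.minorOf_deltaY_or_triangle x y z with h | ⟨w₁, w₂, w₃, hx, hy, hz, h₁₂, h₁₃, h₂₃⟩
    · exact hK₅ h
    · exact hK₃₃ ((hf.minorOf_deltaY_deltaY hx hy hz h₁₂.ne h₂₃.ne h₁₃.ne).of_containsSubgraph
        (containsSubgraph_K33_deltaY_K5 h₁₂.ne h₂₃.ne h₁₃.ne))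
  · obtain ⟨f, hf⟩ := minorOf_iff_exists_isMinorModel.1 hG₃₃
    rcases hf.minorOf_deltaY_or_triangle x y z with h | ⟨w₁, w₂, w₃, -, -, -, h₁₂, h₁₃, h₂₃⟩
    · exact hK₃₃ h
    · exact completeBipartiteGraph_cliqueFree_three _ _ _ (is3Clique_triple_iff.2 ⟨h₁₂, h₁₃, h₂₃⟩)

/-- The ΔY-exchange preserves nonplanarity (equivalently, the YΔ-operation preserves
planarity): if `G` is nonplanar and `H` is obtained from `G` by a ΔY-exchange on a
triangle of `G`, then `H` is nonplanar. -/
theorem deltaY_preserves_nonplanar {V : Type*} (G : SimpleGraph V) (x y z : V)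
    (hxy : G.Adj x y) (hyz : G.Adj y z) (hxz : G.Adj x z)
    (hG : ¬ IsPlanar G) : ¬ IsPlanar (deltaY G x y z) :=
  deltaY_preserves_nonplanar_general G x y z hG
end

section
/- The automorphism group of the Petersen graph is isomorphic to the symmetric group S_5. -/
/-!
A permutation of the five points acts on 2-subsets and preserves disjointness. Conversely, four
distinct pairwise intersecting 2-subsets of a 5-set share a point, so an automorphism maps each
star `{{i, j} | j ≠ i}` onto a star; the centres of the image stars define a permutation of the
points, and since `{i, j}` is the only vertex in the stars of both `i` and `j`, the automorphism is
the one induced by that permutation.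
-/

open SimpleGraph

def Petersen : SimpleGraph {s : Finset (Fin 5) // s.card = 2} where
  Adj a b := Disjoint a.1 b.1
  symm := ⟨fun _ _ h => h.symm⟩
  loopless := by
    constructor
    intro a h
    have h1 : a.1 = ∅ := by simpa using disjoint_self.mp h
    have h2 := a.2
    rw [h1] at h2
    simp at h2

open Finset

namespace Petersen

abbrev Vertex := {s : Finset (Fin 5) // s.card = 2}

instance : DecidableRel Petersen.Adj := fun a b => decidableDisjoint a.1 b.1

def pair {i j : Fin 5} (h : i ≠ j) : Vertex := ⟨{i, j}, card_pair h⟩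

lemma pair_comm {i j : Fin 5} (h : i ≠ j) : pair h.symm = pair h :=
  Subtype.ext (Finset.pair_comm j i)

lemma eq_pair_of_mem (s : Vertex) {i j : Fin 5} (h : i ≠ j) (hi : i ∈ s.1) (hj : j ∈ s.1) :
    s = pair h :=
  Subtype.ext (eq_of_subset_of_card_le (insert_subset hi (singleton_subset_iff.2 hj))
    (by rw [s.2, card_pair h])).symm

lemma exists_eq_pair (s : Vertex) : ∃ (i j : Fin 5) (h : i ≠ j), s = pair h := by
  obtain ⟨i, j, h, hs⟩ := card_eq_two.1 s.2
  exact ⟨i, j, h, Subtype.ext hs⟩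

lemma pair_ne_pair {i j k : Fin 5} (hij : i ≠ j) (hik : i ≠ k) (hjk : j ≠ k) :
    pair hij ≠ pair hik := by
  intro h
  have hj : j ∈ (pair hik).1 := h ▸ by simp [pair]
  simp only [pair, mem_insert, mem_singleton] at hj
  exact hj.elim hij.symm hjk

lemma not_adj_pair_pair {i j k : Fin 5} (hij : i ≠ j) (hik : i ≠ k) :
    ¬ Petersen.Adj (pair hij) (pair hik) :=
  not_disjoint_iff.2 ⟨i, by simp [pair], by simp [pair]⟩

lemma exists_others (i : Fin 5) : ∃ a b c d : Fin 5,
    i ≠ a ∧ i ≠ b ∧ i ≠ c ∧ i ≠ d ∧ a ≠ b ∧ a ≠ c ∧ a ≠ d ∧ b ≠ c ∧ b ≠ d ∧ c ≠ d ∧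
    ∀ j, i ≠ j → j = a ∨ j = b ∨ j = c ∨ j = d := by
  revert i; decide

lemma exists_adj_pair_pair {i j : Fin 5} (h : i ≠ j) :
    ∃ (k l : Fin 5) (hik : i ≠ k) (hjl : j ≠ l), Petersen.Adj (pair hik) (pair hjl) := by
  revert i j; decide

set_option synthInstance.maxSize 2000 in
lemma exists_mem_of_pairwise_not_adj : ∀ s t u v : Vertex,
    s ≠ t → s ≠ u → s ≠ v → t ≠ u → t ≠ v → u ≠ v →
    ¬ Petersen.Adj s t → ¬ Petersen.Adj s u → ¬ Petersen.Adj s v →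
    ¬ Petersen.Adj t u → ¬ Petersen.Adj t v → ¬ Petersen.Adj u v →
    ∃ x, x ∈ s.1 ∧ x ∈ t.1 ∧ x ∈ u.1 ∧ x ∈ v.1 := by
  decide

def ofPerm : Equiv.Perm (Fin 5) →* (Petersen ≃g Petersen) where
  toFun π :=
    { toEquiv := π.finsetCongr.subtypeEquiv fun s => by simp
      map_rel_iff' := disjoint_map _ }
  map_one' := RelIso.ext fun s => Subtype.ext (s.1.map_refl)
  map_mul' π τ := RelIso.ext fun s => Subtype.ext (s.1.map_map τ.toEmbedding π.toEmbedding).symm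

lemma ofPerm_pair (π : Equiv.Perm (Fin 5)) {i j : Fin 5} (h : i ≠ j) :
    ofPerm π (pair h) = pair (π.injective.ne h) :=
  Subtype.ext (map_insert ..)

section Automorphism

variable (f : Petersen ≃g Petersen)

lemma existsUnique_mem_apply_pair (i : Fin 5) :
    ∃! x : Fin 5, ∀ j (h : i ≠ j), x ∈ (f (pair h)).1 := by
  obtain ⟨a, b, c, d, ha, hb, hc, hd, hab, hac, had, hbc, hbd, hcd, hj⟩ := exists_others i
  have hne {j k : Fin 5} (hj : i ≠ j) (hk : i ≠ k) (hjk : j ≠ k) : f (pair hj) ≠ f (pair hk) :=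
    f.injective.ne (pair_ne_pair hj hk hjk)
  have hnadj {j k : Fin 5} (hj : i ≠ j) (hk : i ≠ k) : ¬ Petersen.Adj (f (pair hj)) (f (pair hk)) :=
    f.map_adj_iff.not.2 (not_adj_pair_pair hj hk)
  obtain ⟨x, hxa, hxb, hxc, hxd⟩ := exists_mem_of_pairwise_not_adj _ _ _ _
    (hne ha hb hab) (hne ha hc hac) (hne ha hd had) (hne hb hc hbc) (hne hb hd hbd) (hne hc hd hcd)
    (hnadj ha hb) (hnadj ha hc) (hnadj ha hd) (hnadj hb hc) (hnadj hb hd) (hnadj hc hd)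
  refine ⟨x, fun j h => ?_, fun y hy => ?_⟩
  · rcases hj j h with rfl | rfl | rfl | rfl <;> assumption
  · by_contra hyx
    exact hne ha hb hab <|
      (eq_pair_of_mem _ hyx (hy a ha) hxa).trans (eq_pair_of_mem _ hyx (hy b hb) hxb).symm

noncomputable def pointMap (i : Fin 5) : Fin 5 :=
  Fintype.choose _ (existsUnique_mem_apply_pair f i)

lemma pointMap_mem {i j : Fin 5} (h : i ≠ j) : pointMap f i ∈ (f (pair h)).1 :=
  Fintype.choose_spec _ (existsUnique_mem_apply_pair f i) j h

lemma eq_pointMap {i x : Fin 5} (hx : ∀ j (h : i ≠ j), x ∈ (f (pair h)).1) : x = pointMap f i :=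
  (existsUnique_mem_apply_pair f i).unique hx fun _ => pointMap_mem f

lemma pointMap_injective : Function.Injective (pointMap f) := by
  intro i j hij
  by_contra hne
  obtain ⟨k, l, hik, hjl, hadj⟩ := exists_adj_pair_pair hne
  exact disjoint_left.1 (f.map_adj_iff.2 hadj) (pointMap_mem f hik) (hij ▸ pointMap_mem f hjl)

lemma apply_pair {i j : Fin 5} (h : i ≠ j) : f (pair h) = pair ((pointMap_injective f).ne h) :=
  eq_pair_of_mem _ _ (pointMap_mem f h) (pair_comm h ▸ pointMap_mem f h.symm)

noncomputable def toPerm : Equiv.Perm (Fin 5) :=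
  Equiv.ofBijective (pointMap f) (pointMap_injective f).bijective_of_finite

lemma ofPerm_toPerm : ofPerm (toPerm f) = f := by
  ext1 s
  obtain ⟨i, j, h, rfl⟩ := exists_eq_pair s
  rw [ofPerm_pair, apply_pair]
  rfl

end Automorphism

lemma toPerm_ofPerm (π : Equiv.Perm (Fin 5)) : toPerm (ofPerm π) = π :=
  Equiv.ext fun i => (eq_pointMap _ fun _ h => by rw [ofPerm_pair]; exact mem_insert_self _ _).symm

lemma ofPerm_bijective : Function.Bijective ofPerm :=
  Function.bijective_iff_has_inverse.2 ⟨toPerm, toPerm_ofPerm, ofPerm_toPerm⟩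

end Petersen

/-- The automorphism group of the Petersen graph is isomorphic to `S₅`. -/
theorem petersen_aut_group :
    Nonempty ((Petersen ≃g Petersen) ≃* Equiv.Perm (Fin 5)) :=
  ⟨(MulEquiv.ofBijective _ Petersen.ofPerm_bijective).symm⟩
end

section
/- The Petersen graph minus any single edge is nonplanar. -/
open SimpleGraph

/-! Permutations of `Fin 5` act on the Petersen graph, transitively on its edges, so it suffices to
delete the edge `{0,1}–{2,3}`. What remains still has a `K₃,₃` minor: contract the disjoint edges
`{0,2}–{1,4}`, `{0,1}–{2,4}`, `{0,4}–{1,3}` and keep the vertices `{1,2}`, `{3,4}`, `{0,3}`; the vertex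
`{2,3}` is not used at all. -/

namespace SimpleGraph

variable {V W : Type*} {G : SimpleGraph V} {G' : SimpleGraph W}

def Copy.deleteEdges (f : Copy G G') (s : Set (Sym2 V)) :
    Copy (G.deleteEdges s) (G'.deleteEdges (Sym2.map f '' s)) :=
  Hom.toCopy
    { toFun := f
      map_rel' := fun {u v} huv => by
        rw [deleteEdges_adj] at huv ⊢
        refine ⟨f.toHom.map_adj huv.1, ?_⟩
        rintro ⟨e, he, hfe⟩
        have hfe' : e = s(u, v) := Sym2.map.injective f.injective hfe
        exact huv.2 (hfe' ▸ he) }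
    f.injective

theorem induce_mem_sym2_connected {z : Sym2 V} (hz : z.IsDiag ∨ z ∈ G.edgeSet) :
    (G.induce {x | x ∈ z}).Connected := by
  induction z using Sym2.ind with
  | _ a b =>
    have hab : {x | x ∈ s(a, b)} = ({a, b} : Set V) := by ext; simp
    rw [hab]
    rcases hz with h | h
    · rw [Sym2.mk_isDiag_iff] at h
      rw [h, Set.pair_eq_singleton]
      exact ⟨Preconnected.of_subsingleton⟩
    · exact induce_pair_connected_of_adj h

end SimpleGraph

theorem MinorOf.map {U V W : Type*} {H : SimpleGraph U} {G : SimpleGraph V} {G' : SimpleGraph W}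
    (h : MinorOf H G) (f : Copy G G') : MinorOf H G' := by
  obtain ⟨B, hconn, hdisj, hadj⟩ := h
  refine ⟨fun u => f '' B u, fun u => ?_, fun u u' huu' => ?_, fun u u' huu' => ?_⟩
  · exact (hconn u).map (induceHom f.toHom (Set.mapsTo_image f (B u)))
      (fun ⟨_, x, hx, hfx⟩ => ⟨⟨x, hx⟩, Subtype.ext hfx⟩)
  · exact (Set.disjoint_image_iff f.injective).mpr (hdisj huu')
  · obtain ⟨a, ha, b, hb, hab⟩ := hadj u u' huu'
    exact ⟨f a, Set.mem_image_of_mem f ha, f b, Set.mem_image_of_mem f hb, f.toHom.map_adj hab⟩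

/-- Branch sets of at most two vertices, encoded as elements of `Sym2 V` so that the conditions
become decidable for concrete finite graphs. -/
theorem MinorOf.of_sym2 {U V : Type*} {H : SimpleGraph U} {G : SimpleGraph V} (B : U → Sym2 V)
    (hconn : ∀ u, (B u).IsDiag ∨ B u ∈ G.edgeSet)
    (hdisj : Pairwise fun u u' => ∀ x ∈ B u, x ∉ B u')
    (hadj : ∀ u u', H.Adj u u' → ∃ x ∈ B u, ∃ y ∈ B u', G.Adj x y) :
    MinorOf H G :=
  ⟨fun u => {x | x ∈ B u}, fun u => induce_mem_sym2_connected (hconn u),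
    fun _ _ h => Set.disjoint_left.2 (hdisj h), hadj⟩

abbrev PetersenVertex := {s : Finset (Fin 5) // s.card = 2}

instance : DecidableRel Petersen.Adj :=
  fun a b => inferInstanceAs (Decidable (Disjoint a.1 b.1))

def petersenVertex (i j : Fin 5) (h : i ≠ j := by decide) : PetersenVertex :=
  ⟨{i, j}, Finset.card_pair h⟩

def petersenAutOfPerm (σ : Equiv.Perm (Fin 5)) : Petersen ≃g Petersen where
  toEquiv := σ.finsetCongr.subtypeEquiv fun s => by simp
  map_rel_iff' {a b} := by
    show Disjoint _ _ ↔ Disjoint _ _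
    simp [Finset.disjoint_map]

def petersenBaseEdge : Sym2 PetersenVertex := s(petersenVertex 0 1, petersenVertex 2 3)

theorem exists_perm_map_petersenBaseEdge_eq : ∀ a b : PetersenVertex, Petersen.Adj a b →
    ∃ σ : Equiv.Perm (Fin 5), Sym2.map (petersenAutOfPerm σ) petersenBaseEdge = s(a, b) := by
  decide

set_option synthInstance.maxSize 2000 in
theorem minorOf_K33_petersen_deleteEdges_baseEdge :
    MinorOf (completeBipartiteGraph (Fin 3) (Fin 3)) (Petersen.deleteEdges {petersenBaseEdge}) :=
  MinorOf.of_sym2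
    (Sum.elim
      ![s(petersenVertex 0 2, petersenVertex 1 4), s(petersenVertex 1 2, petersenVertex 1 2),
        s(petersenVertex 0 1, petersenVertex 2 4)]
      ![s(petersenVertex 0 4, petersenVertex 1 3), s(petersenVertex 3 4, petersenVertex 3 4),
        s(petersenVertex 0 3, petersenVertex 0 3)])
    (by decide) (by unfold Pairwise; decide) (by simp only [completeBipartiteGraph_adj]; decide)

/-- The Petersen graph minus any single edge is nonplanar. -/
theorem petersen_minus_edge_nonplanar (e : Sym2 {s : Finset (Fin 5) // s.card = 2})
    (he : e ∈ Petersen.edgeSet) :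
    ¬ IsPlanar (Petersen.deleteEdges {e}) := by
  induction e using Sym2.ind with
  | _ a b =>
    obtain ⟨σ, hσ⟩ := exists_perm_map_petersenBaseEdge_eq a b he
    intro hplanar
    have f : Copy (Petersen.deleteEdges {petersenBaseEdge}) (Petersen.deleteEdges {s(a, b)}) := by
      rw [← hσ, ← Set.image_singleton]
      exact (petersenAutOfPerm σ).toCopy.deleteEdges _
    exact hplanar.2 (minorOf_K33_petersen_deleteEdges_baseEdge.map f)
end

section
/- Let K_{3,3,1} have parts {v}, {a,b,c}, {x,y,z}. If the edges (a,x) and (b,x) are removed but every edge from v to {a,b,c} is retained, and edge (v,x) is retained as well as (v,a), then the resulting graph has a K_{3,3} minor (obtained by contracting the edge (v,a)), hence is nonplanar. -/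
open SimpleGraph

/-- Partition function for `K_{3,3,1}`: vertex 0 is the singleton part,
vertices 1,2,3 and 4,5,6 are the two parts of size 3. -/
def tpart : Fin 7 → Fin 3 := ![0, 1, 1, 1, 2, 2, 2]

/-- The complete tripartite graph `K_{3,3,1}` on parts {0}, {1,2,3}, {4,5,6}. -/
def K331 : SimpleGraph (Fin 7) where
  Adj i j := tpart i ≠ tpart j
  symm := ⟨fun _ _ h => Ne.symm h⟩
  loopless := ⟨fun _ h => h rfl⟩

/-! The vertices `v, y, z` (= 0, 5, 6) are each adjacent to all of `a, b, c` (= 1, 2, 3), and none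
of these nine edges is deleted, so `K₃,₃` is already a subgraph, and a subgraph is a minor with
singleton branch sets. -/

theorem MinorOf.of_containsSubgraph_s16 {W V : Type*} {H : SimpleGraph W} {G : SimpleGraph V}
    (h : ContainsSubgraph H G) : MinorOf H G := by
  obtain ⟨f, hf, hadj⟩ := h
  exact ⟨fun w => {f w}, fun _ => Connected.of_subsingleton,
    fun _ _ hne => Set.disjoint_singleton.mpr (hf.ne hne),
    fun w w' h => ⟨f w, rfl, f w', rfl, hadj w w' h⟩⟩

theorem containsSubgraph_K33_K331_deleteEdges :
    ContainsSubgraph (completeBipartiteGraph (Fin 3) (Fin 3))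
      (K331.deleteEdges {s((1 : Fin 7), 4), s(2, 4)}) := by
  refine ⟨Sum.elim ![0, 5, 6] ![1, 2, 3], by decide, ?_⟩
  simp only [deleteEdges_adj, K331, tpart, completeBipartiteGraph_adj, Set.mem_insert_iff,
    Set.mem_singleton_iff, Sym2.eq_iff]
  decide

/-- In `K_{3,3,1}` with parts `{v} = {0}`, `{a,b,c} = {1,2,3}`, `{x,y,z} = {4,5,6}`:
removing the edges `(a,x)` and `(b,x)` (all edges at `v` being retained, in particular
`(v,x)` and `(v,a)`) leaves a graph with a `K₃,₃` minor, hence nonplanar. -/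
theorem K331_minus_two_edges_at_x_nonplanar :
    MinorOf (completeBipartiteGraph (Fin 3) (Fin 3))
      (K331.deleteEdges {s((1 : Fin 7), 4), s(2, 4)}) ∧
    ¬ IsPlanar (K331.deleteEdges {s((1 : Fin 7), 4), s(2, 4)}) := by
  have hminor := MinorOf.of_containsSubgraph_s16 containsSubgraph_K33_K331_deleteEdges
  exact ⟨hminor, fun hplanar => hplanar.2 hminor⟩
end
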